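/- Define q(t,x,y) := ∫_0^∞ p(s,x,y)·π_t(s) ds and Φ(t) := t^{1/(γβ1)} for 0 < t < 1, Φ(t) := t^{1/(γβ2)} for t ≥ 1 (so Φ = φ⁻¹). Then there exists a constant A > 0, depending only on γ, β1, β2, c₀, the volume growth constants c1, c2, d1, d2 and the heat kernel upper-bound constants, such that for all t > 0 and all x, y ∈ M with x ≠ y: q(t,x,y) ≤ A·min{1/V(x,Φ(t)), t/(V(x,d(x,y))·φ(d(x,y)))}. -/

import Mathlib

/-!
Write `τ(r) = r^β` (`walkTime`) and `ψ(s) = s^(1/β)` (`walkRadius`) for its inverse, with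
`β = β1` below `1` and `β = β2` above. Volume doubling lets the factor
`exp(-C (r^β/s)^(1/(β-1)))` of the sub-Gaussian bounds absorb any polynomial loss in
`V(x, s^(1/β))` versus `V(x, r)`. This yields the on-diagonal bound `p(s,x,y) ≲ 1/V(x,ψ(s))`
for all `s`, and `p(s,x,y) ≲ (s/τ(r))^(1+γ)/V(x,r)` for `s ≤ τ(r)`, `r = d(x,y)`.

Both estimates of `q(t,x,y) = ∫ p(s,x,y) π_t(s) ds` come from splitting the integral at a
time `S`: on `(0,S]` the integrand is at most `1/S` times the claimed bound, and on `(S,∞)`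
the tail `π_t(s) ≤ c₀ t s^(-1-γ)` integrates to `c₀ t S^(-γ)/γ`. For `1/V(x,Φ(t))` take
`S = t^(1/γ)`, where `ψ(S) = Φ(t)` and `exp(-t/s^γ)` supplies the decay below `S`; for
`t/(V(x,r) φ(r))` take `S = τ(r)`, where `τ(r)^γ = φ(r)`.
-/

open Real Set MeasureTheory

theorem exists_exp_neg_mul_rpow_le {C a : ℝ} (hC : 0 < C) (ha : 0 < a) (m : ℝ) :
    ∃ K > 0, ∀ u : ℝ, 1 ≤ u → exp (-C * u ^ a) ≤ K * u ^ (-m) := by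
  set n := ⌈m / a⌉₊
  refine ⟨n.factorial / C ^ n, by positivity, fun u hu => ?_⟩
  have hz0 : 0 < u ^ a := rpow_pos_of_pos (one_pos.trans_le hu) a
  have hexp : (C * u ^ a) ^ n / n.factorial ≤ exp (C * u ^ a) :=
    Real.pow_div_factorial_le_exp _ (by positivity) n
  have hpow : (u ^ a) ^ (-(n : ℝ)) ≤ u ^ (-m) := by
    rw [← rpow_mul (by linarith)]
    refine rpow_le_rpow_of_exponent_le hu ?_
    have := Nat.le_ceil (m / a)
    rw [div_le_iff₀ ha] at this
    nlinarith
  calc exp (-C * u ^ a) = (exp (C * u ^ a))⁻¹ := by rw [neg_mul, exp_neg]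
    _ ≤ ((C * u ^ a) ^ n / n.factorial)⁻¹ := inv_anti₀ (by positivity) hexp
    _ = n.factorial / C ^ n * (u ^ a) ^ (-(n : ℝ)) := by
        rw [rpow_neg hz0.le, rpow_natCast, mul_pow]; field_simp
    _ ≤ n.factorial / C ^ n * u ^ (-m) := by gcongr

theorem mul_exp_neg_mul_rpow_le {a C X e : ℝ} (ha : 0 ≤ a) (hC : 0 ≤ C) (hX : 0 ≤ X) :
    a * exp (-C * X ^ e) ≤ a :=
  mul_le_of_le_one_right ha (exp_le_one_iff.2 (by
    rw [neg_mul, neg_nonpos]; exact mul_nonneg hC (rpow_nonneg hX e)))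

theorem le_of_le_mul_exp_neg {y a b : ℝ} (hy : 0 ≤ y) (hb : 0 ≤ b) (h : y ≤ a * exp (-b)) :
    y ≤ a :=
  h.trans (mul_le_of_le_one_right (nonneg_of_mul_nonneg_left (hy.trans h) (exp_pos _))
    (exp_le_one_iff.2 (neg_nonpos.2 hb)))

theorem exists_div_rpow_mul_exp_neg_le {γ : ℝ} (hγ : 0 < γ) (m : ℝ) :
    ∃ K > 0, ∀ T s : ℝ, 0 < s → s ≤ T →
      T ^ γ / s ^ (1 + γ) * exp (-(T ^ γ / s ^ γ)) ≤ K * (s / T) ^ m / T := by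
  obtain ⟨K, hK, hexp⟩ := exists_exp_neg_mul_rpow_le one_pos hγ (m + 1 + γ)
  refine ⟨K, hK, fun T s hs hsT => ?_⟩
  have hT : 0 < T := hs.trans_le hsT
  set w := T / s
  have hw : 1 ≤ w := (one_le_div hs).2 hsT
  have hwγ : T ^ γ / s ^ γ = w ^ γ := (div_rpow hT.le hs.le γ).symm
  have hw1γ : T ^ γ / s ^ (1 + γ) = w ^ (1 + γ) / T := by
    rw [div_rpow hT.le hs.le, rpow_add hT, rpow_one]
    field_simp
  have hdecay : exp (-(w ^ γ)) ≤ K * w ^ (-(m + 1 + γ)) := by simpa using hexp w hw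
  calc T ^ γ / s ^ (1 + γ) * exp (-(T ^ γ / s ^ γ))
      ≤ w ^ (1 + γ) / T * (K * w ^ (-(m + 1 + γ))) := by
        rw [hwγ, hw1γ]; exact mul_le_mul_of_nonneg_left hdecay (by positivity)
    _ = K * (w ^ (1 + γ) * w ^ (-(m + 1 + γ))) / T := by ring
    _ = K * (s / T) ^ m / T := by
        rw [← rpow_add (by positivity), show 1 + γ + -(m + 1 + γ) = -m by ring,
          rpow_neg (by positivity), ← inv_rpow (by positivity), inv_div]

theorem div_rpow_mul_le_div_rpow {s r β1 β2 k : ℝ} (hs : 0 < s) (hsr : s ≤ r) (hr : 1 ≤ r)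
    (hβ1 : 2 ≤ β1) (hβ2 : 1 ≤ β2) (hk : 0 ≤ k) :
    (s / r ^ β1) ^ (β2 * k) ≤ (s / r ^ β2) ^ k := by
  have hr0 : 0 < r := one_pos.trans_le hr
  rw [rpow_mul (by positivity)]
  refine rpow_le_rpow (by positivity) ?_ hk
  have hsβ : s ^ β2 ≤ s * r ^ (β2 - 1) := by
    rw [show β2 = 1 + (β2 - 1) by ring, rpow_add hs, rpow_one, add_sub_cancel_left]
    gcongr
  have hrβ : r ^ (β2 - 1) * r ^ β2 ≤ r ^ (β1 * β2) := by
    rw [← rpow_add hr0]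
    exact rpow_le_rpow_of_exponent_le hr (by nlinarith)
  rw [div_rpow hs.le (by positivity), ← rpow_mul hr0.le,
    div_le_div_iff₀ (by positivity) (by positivity)]
  calc s ^ β2 * r ^ β2 ≤ s * r ^ (β2 - 1) * r ^ β2 := by gcongr
    _ ≤ s * r ^ (β1 * β2) := by rw [mul_assoc]; gcongr

theorem setIntegral_Ioi_le_of_le_div_of_le_div_rpow {f : ℝ → ℝ} {S D E γ : ℝ}
    (hS : 0 < S) (hγ : 0 < γ) (hf : ∀ s, 0 < s → 0 ≤ f s)
    (hsmall : ∀ s, 0 < s → s ≤ S → f s ≤ D / S)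
    (hlarge : ∀ s, S < s → f s ≤ E / s ^ (1 + γ)) :
    ∫ s in Ioi 0, f s ≤ D + E / (γ * S ^ γ) := by
  set g : ℝ → ℝ := fun s => if s ≤ S then D / S else E * s ^ (-(1 + γ))
  have hg₁ : EqOn g (fun _ => D / S) (Ioc 0 S) := fun s hs => if_pos hs.2
  have hg₂ : EqOn g (fun s => E * s ^ (-(1 + γ))) (Ioi S) := fun s hs =>
    if_neg (not_le.2 hs)
  have hint₁ : IntegrableOn g (Ioc 0 S) :=
    (integrableOn_const measure_Ioc_lt_top.ne).congr_fun hg₁.symm measurableSet_Ioc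
  have hrpow : IntegrableOn (fun s : ℝ => E * s ^ (-(1 + γ))) (Ioi S) :=
    (integrableOn_Ioi_rpow_of_lt (by linarith) hS).const_mul E
  have hint₂ : IntegrableOn g (Ioi S) := hrpow.congr_fun hg₂.symm measurableSet_Ioi
  have hint : IntegrableOn g (Ioi 0) := by
    rw [← Ioc_union_Ioi_eq_Ioi hS.le]; exact hint₁.union hint₂
  have hfg : ∀ s ∈ Ioi (0 : ℝ), f s ≤ g s := by
    intro s (hs : 0 < s)
    by_cases hsS : s ≤ S
    · simpa [g, hsS] using hsmall s hs hsS
    · simp only [g, if_neg hsS]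
      rw [rpow_neg hs.le, ← div_eq_mul_inv]
      exact hlarge s (not_le.1 hsS)
  calc ∫ s in Ioi 0, f s ≤ ∫ s in Ioi 0, g s :=
        integral_mono_of_nonneg ((ae_restrict_iff' measurableSet_Ioi).2 (ae_of_all _ hf)) hint
          ((ae_restrict_iff' measurableSet_Ioi).2 (ae_of_all _ hfg))
    _ = (∫ s in Ioc 0 S, g s) + ∫ s in Ioi S, g s := by
        rw [← Ioc_union_Ioi_eq_Ioi hS.le,
          setIntegral_union (Ioc_disjoint_Ioi le_rfl) measurableSet_Ioi hint₁ hint₂]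
    _ = D + E / (γ * S ^ γ) := by
        rw [setIntegral_congr_fun measurableSet_Ioc hg₁,
          setIntegral_congr_fun measurableSet_Ioi hg₂, setIntegral_const,
          Real.volume_real_Ioc_of_le hS.le, integral_const_mul,
          integral_Ioi_rpow_of_lt (by linarith) hS, smul_eq_mul]
        have : -(1 + γ) + 1 = -γ := by ring
        rw [this, rpow_neg hS.le, sub_zero]
        field_simp

noncomputable def walkTime (β1 β2 r : ℝ) : ℝ := if r < 1 then r ^ β1 else r ^ β2

noncomputable def walkRadius (β1 β2 s : ℝ) : ℝ :=
  if s < 1 then s ^ (1 / β1) else s ^ (1 / β2)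

section WalkScale

variable {β1 β2 : ℝ}

theorem walkTime_pos {r : ℝ} (hr : 0 < r) : 0 < walkTime β1 β2 r := by
  unfold walkTime; split_ifs <;> positivity

theorem walkRadius_pos {s : ℝ} (hs : 0 < s) : 0 < walkRadius β1 β2 s := by
  unfold walkRadius; split_ifs <;> positivity

theorem walkRadius_walkTime (hβ1 : 0 < β1) (hβ2 : 0 < β2) {r : ℝ} (hr : 0 < r) :
    walkRadius β1 β2 (walkTime β1 β2 r) = r := by
  unfold walkTime walkRadius
  by_cases hr1 : r < 1
  · rw [if_pos hr1, if_pos (rpow_lt_one hr.le hr1 hβ1), one_div, rpow_rpow_inv hr.le hβ1.ne']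
  · rw [if_neg hr1, if_neg (not_lt.2 (one_le_rpow (not_lt.1 hr1) hβ2.le)),
      one_div, rpow_rpow_inv hr.le hβ2.ne']

theorem walkRadius_le_walkRadius (hβ1 : 0 < β1) (hβ2 : 0 < β2) {s t : ℝ} (hs : 0 ≤ s)
    (hst : s ≤ t) : walkRadius β1 β2 s ≤ walkRadius β1 β2 t := by
  unfold walkRadius
  split_ifs with hs1 ht1 ht1
  · exact rpow_le_rpow hs hst (by positivity)
  · exact (rpow_le_one hs hs1.le (by positivity)).trans
      (one_le_rpow (not_lt.1 ht1) (by positivity))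
  · exact absurd (hst.trans_lt ht1) hs1
  · exact rpow_le_rpow hs hst (by positivity)

theorem walkRadius_div_le (hβ1 : 1 ≤ β1) (hβ2 : 1 ≤ β2) {s t : ℝ} (hs : 0 < s)
    (hst : s ≤ t) :
    walkRadius β1 β2 t / walkRadius β1 β2 s ≤ t / s := by
  have hts : 1 ≤ t / s := (one_le_div hs).2 hst
  have hinv : ∀ β : ℝ, 1 ≤ β → 1 / β ≤ 1 := fun β hβ =>
    (div_le_one (by linarith)).2 hβ
  unfold walkRadius
  split_ifs with ht1 hs1 hs1
  · rw [← div_rpow (hs.trans_le hst).le hs.le]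
    exact rpow_le_self_of_one_le hts (hinv β1 hβ1)
  · exact absurd (hst.trans_lt ht1) hs1
  · exact div_le_div₀ (hs.trans_le hst).le
      (rpow_le_self_of_one_le (not_lt.1 ht1) (hinv β2 hβ2)) hs
      (self_le_rpow_of_le_one hs.le hs1.le (hinv β1 hβ1))
  · rw [← div_rpow (hs.trans_le hst).le hs.le]
    exact rpow_le_self_of_one_le hts (hinv β2 hβ2)

theorem walkRadius_rpow_one_div {γ t : ℝ} (hγ : 0 < γ) (ht : 0 < t) :
    walkRadius β1 β2 (t ^ (1 / γ)) =
      if t < 1 then t ^ (1 / (γ * β1)) else t ^ (1 / (γ * β2)) := by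
  have hlt : t ^ (1 / γ) < 1 ↔ t < 1 := rpow_lt_one_iff' ht.le (by positivity)
  unfold walkRadius
  simp only [hlt, ← rpow_mul ht.le, one_div_mul_one_div]

theorem walkTime_rpow {γ r : ℝ} (hr : 0 ≤ r) :
    walkTime β1 β2 r ^ γ = if r < 1 then r ^ (γ * β1) else r ^ (γ * β2) := by
  unfold walkTime
  split_ifs <;> rw [← rpow_mul hr, mul_comm]

end WalkScale

structure VolumeDoubling {M : Type*} (V : M → ℝ → ℝ) (c d : ℝ) : Prop where
  pos : ∀ x r, 0 < r → 0 < V x r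
  mono : ∀ x, MonotoneOn (V x) (Ioi 0)
  one_le : 1 ≤ c
  le_mul_rpow : ∀ x r R, 0 < r → r ≤ R → V x R ≤ c * (R / r) ^ d * V x r

theorem volumeDoubling_of_div_le {M : Type*} {V : M → ℝ → ℝ} {c d : ℝ}
    (hpos : ∀ x r, 0 < r → 0 < V x r) (hmono : ∀ x, MonotoneOn (V x) (Ioi 0)) (hc : 1 ≤ c)
    (hdiv : ∀ x r R, 0 < r → r < R → V x R / V x r ≤ c * (R / r) ^ d) :
    VolumeDoubling V c d := by
  refine ⟨hpos, hmono, hc, fun x r R hr hrR => ?_⟩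
  rcases hrR.lt_or_eq with hlt | rfl
  · exact (div_le_iff₀ (hpos x r hr)).1 (hdiv x r R hr hlt)
  · rw [div_self hr.ne', one_rpow, mul_one]
    exact le_mul_of_one_le_left (hpos x r hr).le hc

namespace VolumeDoubling

variable {M : Type*} {V : M → ℝ → ℝ} {c d β1 β2 γ c₀ : ℝ} {f g : ℝ → ℝ}

theorem le_of_le (hV : VolumeDoubling V c d) (x : M) {r R : ℝ} (hr : 0 < r) (hrR : r ≤ R) :
    V x r ≤ V x R :=
  hV.mono x hr (hr.trans_le hrR) hrR

theorem one_div_le (hV : VolumeDoubling V c d) (x : M) {r R : ℝ} (hr : 0 < r) (hrR : r ≤ R) :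
    1 / V x r ≤ c * (R / r) ^ d / V x R := by
  rw [div_le_div_iff₀ (hV.pos x r hr) (hV.pos x R (hr.trans_le hrR)), one_mul]
  exact hV.le_mul_rpow x r R hr hrR

theorem exists_exp_div_le (hV : VolumeDoubling V c d) {β C : ℝ} (hβ : 1 < β) (hC : 0 < C)
    (k : ℝ) : ∃ K > 0, ∀ (x : M) (r s : ℝ), 0 < r → 0 < s → s ≤ r ^ β →
      exp (-C * (r ^ β / s) ^ (1 / (β - 1))) / V x (s ^ (1 / β)) ≤
        K * (s / r ^ β) ^ k / V x r := by
  obtain ⟨K, hK, hexp⟩ :=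
    exists_exp_neg_mul_rpow_le hC (one_div_pos.2 (sub_pos.2 hβ)) (d / β + k)
  refine ⟨c * K, mul_pos (one_pos.trans_le hV.one_le) hK, fun x r s hr hs hsr => ?_⟩
  have hβ0 : 0 < β := one_pos.trans hβ
  set u := r ^ β / s
  have hu : 1 ≤ u := (one_le_div hs).2 hsr
  have hρ : s ^ (1 / β) ≤ r := by
    simpa [one_div, rpow_rpow_inv hr.le hβ0.ne'] using
      rpow_le_rpow hs.le hsr (by positivity : 0 ≤ 1 / β)
  have hratio : r / s ^ (1 / β) = u ^ (1 / β) := by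
    rw [div_rpow (by positivity) hs.le, one_div, rpow_rpow_inv hr.le hβ0.ne']
  have hvol : 1 / V x (s ^ (1 / β)) ≤ c * u ^ (d / β) / V x r := by
    have := hV.one_div_le x (by positivity) hρ
    rwa [hratio, ← rpow_mul (by positivity), one_div_mul_eq_div] at this
  have hpow : u ^ (-(d / β + k)) * u ^ (d / β) = (s / r ^ β) ^ k := by
    rw [← rpow_add (by positivity), show -(d / β + k) + d / β = -k by ring, rpow_neg
      (by positivity), ← inv_rpow (by positivity), inv_div]
  calc exp (-C * u ^ (1 / (β - 1))) / V x (s ^ (1 / β))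
      = exp (-C * u ^ (1 / (β - 1))) * (1 / V x (s ^ (1 / β))) := by ring
    _ ≤ K * u ^ (-(d / β + k)) * (c * u ^ (d / β) / V x r) :=
        mul_le_mul (hexp u hu) hvol (one_div_nonneg.2 (hV.pos x _ (by positivity)).le)
          (by positivity)
    _ = c * K * (u ^ (-(d / β + k)) * u ^ (d / β)) / V x r := by ring
    _ = c * K * (s / r ^ β) ^ k / V x r := by rw [hpow]

theorem one_div_volume_walkRadius_le (hV : VolumeDoubling V c d) (hd : 0 ≤ d) (hβ1 : 1 ≤ β1)
    (hβ2 : 1 ≤ β2) (x : M) {s T : ℝ} (hs : 0 < s) (hsT : s ≤ T) :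
    1 / V x (walkRadius β1 β2 s) ≤ c * (T / s) ^ d / V x (walkRadius β1 β2 T) :=
  (hV.one_div_le x (walkRadius_pos hs)
    (walkRadius_le_walkRadius (by linarith) (by linarith) hs.le hsT)).trans
    (div_le_div_of_nonneg_right (mul_le_mul_of_nonneg_left
      (rpow_le_rpow (div_nonneg (walkRadius_pos (hs.trans_le hsT)).le (walkRadius_pos hs).le)
        (walkRadius_div_le hβ1 hβ2 hs hsT) hd) (one_pos.le.trans hV.one_le))
      (hV.pos x _ (walkRadius_pos (hs.trans_le hsT))).le)

end VolumeDoubling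

section HeatKernel

variable {M : Type*} [MetricSpace M] {V : M → ℝ → ℝ} {c d : ℝ} {β1 β2 : ℝ}
  {p : ℝ → M → M → ℝ} {c2' c4' C2 C4 : ℝ}

theorem exists_heatKernel_le_div_volume_walkRadius (hV : VolumeDoubling V c d) (hβ1 : 1 < β1)
    (hβ2 : 1 ≤ β2) (hc2' : 0 < c2') (hc4' : 0 ≤ c4') (hC2 : 0 < C2) (hC4 : 0 < C4)
    (hp_small : ∀ (s : ℝ) (x y : M), 0 < s → s ≤ max 1 (dist x y) →
      p s x y ≤ (c2' / V x (s ^ (1/β1))) *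
        Real.exp (-C2 * (dist x y ^ β1 / s) ^ (1/(β1 - 1))))
    (hp_large : ∀ (s : ℝ) (x y : M), max 1 (dist x y) ≤ s →
      p s x y ≤ (c4' / V x (s ^ (1/β2))) *
        Real.exp (-C4 * (dist x y ^ β2 / s) ^ (1/(β2 - 1)))) :
    ∃ C > 0, ∀ (x y : M) (s : ℝ), 0 < s → p s x y ≤ C / V x (walkRadius β1 β2 s) := by
  obtain ⟨K, hK, hdecay⟩ := hV.exists_exp_div_le hβ1 hC2 0
  set C := c2' + c4' + c2' * K
  refine ⟨C, by positivity, fun x y s hs => ?_⟩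
  set r := dist x y
  have hVs : ∀ β : ℝ, 0 < V x (s ^ (1 / β)) := fun β => hV.pos x _ (by positivity)
  have hquot : ∀ β : ℝ, 0 ≤ r ^ β / s := fun β =>
    div_nonneg (rpow_nonneg dist_nonneg β) hs.le
  unfold walkRadius
  split_ifs with hs1
  · calc p s x y ≤ c2' / V x (s ^ (1 / β1)) :=
          (hp_small s x y hs (hs1.le.trans (le_max_left _ _))).trans
            (mul_exp_neg_mul_rpow_le (div_nonneg hc2'.le (hVs β1).le) hC2.le (hquot β1))
      _ ≤ C / V x (s ^ (1 / β1)) := div_le_div_of_nonneg_right (by nlinarith) (hVs β1).le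
  have hs1 : 1 ≤ s := not_lt.1 hs1
  rcases le_or_gt r s with hrs | hsr
  · calc p s x y ≤ c4' / V x (s ^ (1 / β2)) :=
          (hp_large s x y (max_le hs1 hrs)).trans
            (mul_exp_neg_mul_rpow_le (div_nonneg hc4' (hVs β2).le) hC4.le (hquot β2))
      _ ≤ C / V x (s ^ (1 / β2)) := div_le_div_of_nonneg_right (by nlinarith) (hVs β2).le
  · have hr : 0 < r := hs.trans hsr
    have hρ : s ^ (1 / β2) ≤ r :=
      (rpow_le_self_of_one_le hs1 ((div_le_one (by linarith)).2 hβ2)).trans hsr.le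
    calc p s x y ≤ c2' * (exp (-C2 * (r ^ β1 / s) ^ (1 / (β1 - 1))) / V x (s ^ (1 / β1))) :=
          (hp_small s x y hs (hsr.le.trans (le_max_right _ _))).trans_eq (by ring)
      _ ≤ c2' * (K * (s / r ^ β1) ^ (0 : ℝ) / V x r) :=
          mul_le_mul_of_nonneg_left (hdecay x r s hr hs
            (hsr.le.trans (self_le_rpow_of_one_le (hs1.trans hsr.le) hβ1.le))) hc2'.le
      _ = c2' * K / V x r := by rw [rpow_zero, mul_one, mul_div_assoc]
      _ ≤ c2' * K / V x (s ^ (1 / β2)) :=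
          div_le_div_of_nonneg_left (by positivity) (hVs β2) (hV.le_of_le x (by positivity) hρ)
      _ ≤ C / V x (s ^ (1 / β2)) := div_le_div_of_nonneg_right (by linarith) (hVs β2).le

theorem exists_heatKernel_le_of_le_walkTime (hV : VolumeDoubling V c d)
    (hβ1 : 2 ≤ β1) (hβ2 : 1 < β2) (hc2' : 0 ≤ c2') (hc4' : 0 ≤ c4') (hC2 : 0 < C2)
    (hC4 : 0 < C4)
    (hp_small : ∀ (s : ℝ) (x y : M), 0 < s → s ≤ max 1 (dist x y) →
      p s x y ≤ (c2' / V x (s ^ (1/β1))) *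
        Real.exp (-C2 * (dist x y ^ β1 / s) ^ (1/(β1 - 1))))
    (hp_large : ∀ (s : ℝ) (x y : M), max 1 (dist x y) ≤ s →
      p s x y ≤ (c4' / V x (s ^ (1/β2))) *
        Real.exp (-C4 * (dist x y ^ β2 / s) ^ (1/(β2 - 1))))
    {k : ℝ} (hk : 0 ≤ k) :
    ∃ C ≥ 0, ∀ (x y : M) (s : ℝ), x ≠ y → 0 < s → s ≤ walkTime β1 β2 (dist x y) →
      p s x y ≤ C * (s / walkTime β1 β2 (dist x y)) ^ k / V x (dist x y) := by
  obtain ⟨K1, hK1, hdecay1⟩ := hV.exists_exp_div_le (β := β1) (by linarith) hC2 k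
  obtain ⟨K2, hK2, hdecay2⟩ := hV.exists_exp_div_le (β := β1) (by linarith) hC2 (β2 * k)
  obtain ⟨K3, hK3, hdecay3⟩ := hV.exists_exp_div_le hβ2 hC4 k
  set C := c2' * K1 + c2' * K2 + c4' * K3
  refine ⟨C, by positivity, fun x y s hxy hs hsτ => ?_⟩
  set r := dist x y
  have hr : 0 < r := dist_pos.2 hxy
  have hweaken : ∀ a K q : ℝ, a * K ≤ C → 0 ≤ q → a * (K * q / V x r) ≤ C * q / V x r :=
    fun a K q h hq => by
      rw [← mul_div_assoc, ← mul_assoc]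
      exact div_le_div_of_nonneg_right (mul_le_mul_of_nonneg_right h hq) (hV.pos x r hr).le
  unfold walkTime at hsτ ⊢
  split_ifs at hsτ ⊢ with hr1
  · have hs1 : s ≤ 1 := hsτ.trans (rpow_le_one hr.le hr1.le (by linarith))
    calc p s x y ≤ c2' * (exp (-C2 * (r ^ β1 / s) ^ (1 / (β1 - 1))) / V x (s ^ (1 / β1))) :=
          (hp_small s x y hs (hs1.trans (le_max_left _ _))).trans_eq (by ring)
      _ ≤ c2' * (K1 * (s / r ^ β1) ^ k / V x r) :=
          mul_le_mul_of_nonneg_left (hdecay1 x r s hr hs hsτ) hc2'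
      _ ≤ C * (s / r ^ β1) ^ k / V x r := hweaken _ _ _ (by nlinarith) (by positivity)
  have hr1 : 1 ≤ r := not_lt.1 hr1
  -- For `s ≤ r` only the `β1`-bound applies; decay of order `β2 * k` in `s / r ^ β1`
  -- dominates order `k` in `s / r ^ β2`.
  rcases le_or_gt s r with hsr | hrs
  · calc p s x y ≤ c2' * (exp (-C2 * (r ^ β1 / s) ^ (1 / (β1 - 1))) / V x (s ^ (1 / β1))) :=
          (hp_small s x y hs (hsr.trans (le_max_right _ _))).trans_eq (by ring)
      _ ≤ c2' * (K2 * (s / r ^ β1) ^ (β2 * k) / V x r) :=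
          mul_le_mul_of_nonneg_left (hdecay2 x r s hr hs
            (hsr.trans (self_le_rpow_of_one_le hr1 (by linarith)))) hc2'
      _ ≤ c2' * (K2 * (s / r ^ β2) ^ k / V x r) :=
          mul_le_mul_of_nonneg_left (div_le_div_of_nonneg_right (mul_le_mul_of_nonneg_left
            (div_rpow_mul_le_div_rpow hs hsr hr1 hβ1 hβ2.le hk) hK2.le)
            (hV.pos x r hr).le) hc2'
      _ ≤ C * (s / r ^ β2) ^ k / V x r := hweaken _ _ _ (by nlinarith) (by positivity)
  · calc p s x y ≤ c4' * (exp (-C4 * (r ^ β2 / s) ^ (1 / (β2 - 1))) / V x (s ^ (1 / β2))) :=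
          (hp_large s x y (max_le (hr1.trans hrs.le) hrs.le)).trans_eq (by ring)
      _ ≤ c4' * (K3 * (s / r ^ β2) ^ k / V x r) :=
          mul_le_mul_of_nonneg_left (hdecay3 x r s hr hs hsτ) hc4'
      _ ≤ C * (s / r ^ β2) ^ k / V x r := hweaken _ _ _ (by nlinarith) (by positivity)

end HeatKernel

namespace VolumeDoubling

variable {M : Type*} {V : M → ℝ → ℝ} {c d β1 β2 γ c₀ : ℝ} {f g : ℝ → ℝ}

theorem integral_mul_le_div_volume_mul_walkTime_rpow (hV : VolumeDoubling V c d)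
    (hβ1 : 0 < β1) (hβ2 : 0 < β2) (hγ : 0 < γ) {x : M} {r t C C' : ℝ} (hr : 0 < r)
    (ht : 0 < t) (hC : 0 ≤ C) (hf0 : ∀ s, 0 < s → 0 ≤ f s)
    (hf : ∀ s, 0 < s → f s ≤ C / V x (walkRadius β1 β2 s))
    (hf' : ∀ s, 0 < s → s ≤ walkTime β1 β2 r →
      f s ≤ C' * (s / walkTime β1 β2 r) ^ (1 + γ) / V x r)
    (hg0 : ∀ s, 0 < s → 0 ≤ g s)
    (hg : ∀ s, 0 < s → g s ≤ c₀ * (t / s ^ (1 + γ)) * exp (-(t / s ^ γ))) :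
    ∫ s in Ioi 0, f s * g s ≤
      (C' * c₀ + C * c₀ / γ) * (t / (V x r * walkTime β1 β2 r ^ γ)) := by
  set τ := walkTime β1 β2 r
  have hτ : 0 < τ := walkTime_pos hr
  have hVr : 0 < V x r := hV.pos x r hr
  have hg' : ∀ s, 0 < s → g s ≤ c₀ * t / s ^ (1 + γ) := fun s hs =>
    (le_of_le_mul_exp_neg (hg0 s hs) (by positivity) (hg s hs)).trans_eq (mul_div_assoc ..).symm
  refine (setIntegral_Ioi_le_of_le_div_of_le_div_rpow (D := C' * c₀ * t / (V x r * τ ^ γ))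
    (E := C * c₀ * t / V x r) hτ hγ (fun s hs => mul_nonneg (hf0 s hs) (hg0 s hs)) ?_ ?_).trans_eq
      (by field_simp)
  · intro s hs hsτ
    calc f s * g s ≤ C' * (s / τ) ^ (1 + γ) / V x r * (c₀ * t / s ^ (1 + γ)) :=
          mul_le_mul (hf' s hs hsτ) (hg' s hs) (hg0 s hs) ((hf0 s hs).trans (hf' s hs hsτ))
      _ = C' * c₀ * t / (V x r * τ ^ γ) / τ := by
          rw [div_rpow hs.le hτ.le, rpow_add hτ, rpow_one]
          field_simp
  · intro s hsτ
    have hs : 0 < s := hτ.trans hsτ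
    have hρ : r ≤ walkRadius β1 β2 s := by
      simpa only [τ, walkRadius_walkTime hβ1 hβ2 hr] using
        walkRadius_le_walkRadius hβ1 hβ2 hτ.le hsτ.le
    calc f s * g s ≤ C / V x r * (c₀ * t / s ^ (1 + γ)) :=
          mul_le_mul ((hf s hs).trans (div_le_div_of_nonneg_left hC hVr (hV.le_of_le x hr hρ)))
            (hg' s hs) (hg0 s hs) (by positivity)
      _ = C * c₀ * t / V x r / s ^ (1 + γ) := by ring

theorem exists_integral_mul_le_div_volume_walkRadius (hV : VolumeDoubling V c d) (hd : 0 ≤ d)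
    (hβ1 : 1 ≤ β1) (hβ2 : 1 ≤ β2) (hγ : 0 < γ) {C : ℝ} (hC : 0 < C) (hc₀ : 0 < c₀) :
    ∃ A > 0, ∀ (x : M) (t : ℝ) (f g : ℝ → ℝ), 0 < t → (∀ s, 0 < s → 0 ≤ f s) →
      (∀ s, 0 < s → f s ≤ C / V x (walkRadius β1 β2 s)) → (∀ s, 0 < s → 0 ≤ g s) →
      (∀ s, 0 < s → g s ≤ c₀ * (t / s ^ (1 + γ)) * exp (-(t / s ^ γ))) →
      ∫ s in Ioi 0, f s * g s ≤ A / V x (walkRadius β1 β2 (t ^ (1 / γ))) := by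
  obtain ⟨K, hK, hdens⟩ := exists_div_rpow_mul_exp_neg_le hγ d
  have hc : 0 < c := one_pos.trans_le hV.one_le
  refine ⟨C * c * c₀ * K + C * c₀ / γ, by positivity, fun x t f g ht hf0 hf hg0 hg => ?_⟩
  set T := t ^ (1 / γ)
  have hT : 0 < T := by positivity
  have hTγ : T ^ γ = t := by simp only [T, one_div]; exact rpow_inv_rpow ht.le hγ.ne'
  rw [← hTγ] at hg
  set R := walkRadius β1 β2 T
  have hVR : 0 < V x R := hV.pos x R (walkRadius_pos hT)
  refine (setIntegral_Ioi_le_of_le_div_of_le_div_rpow (D := C * c * c₀ * K / V x R)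
    (E := C * c₀ * T ^ γ / V x R) hT hγ (fun s hs => mul_nonneg (hf0 s hs) (hg0 s hs))
    ?_ ?_).trans_eq (by field_simp)
  · intro s hs hsT
    have hfs : f s ≤ C * (c * (T / s) ^ d / V x R) :=
      (hf s hs).trans_eq (mul_one_div _ _).symm |>.trans
        (mul_le_mul_of_nonneg_left (hV.one_div_volume_walkRadius_le hd hβ1 hβ2 x hs hsT) hC.le)
    have hgs : g s ≤ c₀ * (K * (s / T) ^ d / T) :=
      (hg s hs).trans_eq (mul_assoc _ _ _) |>.trans
        (mul_le_mul_of_nonneg_left (hdens T s hs hsT) hc₀.le)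
    calc f s * g s ≤ C * (c * (T / s) ^ d / V x R) * (c₀ * (K * (s / T) ^ d / T)) :=
          mul_le_mul hfs hgs (hg0 s hs) (by positivity)
      _ = C * c * c₀ * K * ((T / s) * (s / T)) ^ d / V x R / T := by
          rw [mul_rpow (by positivity) (by positivity)]; ring
      _ = C * c * c₀ * K / V x R / T := by
          rw [show T / s * (s / T) = 1 by field_simp, one_rpow, mul_one]
  · intro s hTs
    have hs : 0 < s := hT.trans hTs
    calc f s * g s ≤ C / V x R * (c₀ * T ^ γ / s ^ (1 + γ)) :=
          mul_le_mul ((hf s hs).trans (div_le_div_of_nonneg_left hC.le hVR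
            (hV.le_of_le x (walkRadius_pos hT)
              (walkRadius_le_walkRadius (by linarith) (by linarith) hT.le hTs.le))))
            ((le_of_le_mul_exp_neg (hg0 s hs) (by positivity) (hg s hs)).trans_eq
              (mul_div_assoc ..).symm) (hg0 s hs) (by positivity)
      _ = C * c₀ * T ^ γ / V x R / s ^ (1 + γ) := by ring

end VolumeDoubling

theorem subordinated_heat_kernel_upper_general
    {M : Type*} [MetricSpace M]
    (V : M → ℝ → ℝ) (c1 c2 d1 d2 : ℝ)
    (hc2 : 1 ≤ c2) (hd1 : 0 < d1) (hd12 : d1 ≤ d2)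
    (hVpos : ∀ (x : M) (r : ℝ), 0 < r → 0 < V x r)
    (hVmono : ∀ x : M, MonotoneOn (V x) (Ioi (0:ℝ)))
    (hVgrowth : ∀ (x : M) (r R : ℝ), 0 < r → r < R →
      c1 * (R / r) ^ d1 ≤ V x R / V x r ∧ V x R / V x r ≤ c2 * (R / r) ^ d2)
    (γ β1 β2 : ℝ) (hγ0 : 0 < γ) (hβ1 : 2 ≤ β1) (hβ2 : 2 ≤ β2)
    (p : ℝ → M → M → ℝ)
    (hp_nonneg : ∀ (s : ℝ) (x y : M), 0 ≤ p s x y)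
    (c2' c4' C2 C4 : ℝ) (hc2'pos : 0 < c2') (hc4'pos : 0 < c4')
    (hC2 : 0 < C2) (hC4 : 0 < C4)
    (hp_small : ∀ (s : ℝ) (x y : M), 0 < s → s ≤ max 1 (dist x y) →
      p s x y ≤ (c2' / V x (s ^ (1/β1))) *
        Real.exp (-C2 * (dist x y ^ β1 / s) ^ (1/(β1 - 1))))
    (hp_large : ∀ (s : ℝ) (x y : M), max 1 (dist x y) ≤ s →
      p s x y ≤ (c4' / V x (s ^ (1/β2))) *
        Real.exp (-C4 * (dist x y ^ β2 / s) ^ (1/(β2 - 1))))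
    (πsub : ℝ → ℝ → ℝ) (c₀ : ℝ) (hc₀ : 0 < c₀)
    (hπ_nonneg : ∀ t s : ℝ, 0 ≤ πsub t s)
    (hπ_upper : ∀ t s : ℝ, 0 < t → 0 < s →
      πsub t s ≤ c₀ * (t / s ^ (1 + γ)) * Real.exp (-(t / s ^ γ))) :
    ∃ A : ℝ, 0 < A ∧
      ∀ (t : ℝ) (x y : M), 0 < t → x ≠ y →
        ∫ s in Ioi (0:ℝ), p s x y * πsub t s ≤
          A * min (1 / V x (if t < 1 then t ^ (1/(γ * β1)) else t ^ (1/(γ * β2))))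
            (t / (V x (dist x y) *
              (if dist x y < 1 then dist x y ^ (γ * β1) else dist x y ^ (γ * β2)))) := by
  have hV : VolumeDoubling V c2 d2 :=
    volumeDoubling_of_div_le hVpos hVmono hc2 fun x r R hr hrR => (hVgrowth x r R hr hrR).2
  obtain ⟨C, hC, hdiag⟩ := exists_heatKernel_le_div_volume_walkRadius hV (by linarith)
    (by linarith) hc2'pos hc4'pos.le hC2 hC4 hp_small hp_large
  obtain ⟨C', hC', hoff⟩ := exists_heatKernel_le_of_le_walkTime hV hβ1 (by linarith)
    hc2'pos.le hc4'pos.le hC2 hC4 hp_small hp_large (k := 1 + γ) (by positivity)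
  obtain ⟨A, hA, hondiag⟩ := hV.exists_integral_mul_le_div_volume_walkRadius
    (β1 := β1) (β2 := β2) (by linarith) (by linarith) (by linarith) hγ0 hC hc₀
  refine ⟨A + (C' * c₀ + C * c₀ / γ), by positivity, fun t x y ht hxy => ?_⟩
  have hr : 0 < dist x y := dist_pos.2 hxy
  rw [← walkRadius_rpow_one_div hγ0 ht, ← walkTime_rpow hr.le,
    mul_min_of_nonneg _ _ (by positivity)]
  have hVΦ := hV.pos x _ (walkRadius_pos (β1 := β1) (β2 := β2) (rpow_pos_of_pos ht (1 / γ)))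
  have hVr := hV.pos x _ hr
  have hφ := rpow_pos_of_pos (walkTime_pos (β1 := β1) (β2 := β2) hr) γ
  refine le_min ?_ ?_
  · refine (hondiag x t _ _ ht (fun s _ => hp_nonneg s x y) (hdiag x y)
      (fun s _ => hπ_nonneg t s) (fun s hs => hπ_upper t s ht hs)).trans ?_
    rw [← mul_one_div]
    exact mul_le_mul_of_nonneg_right (le_add_of_nonneg_right (by positivity)) (by positivity)
  · refine (hV.integral_mul_le_div_volume_mul_walkTime_rpow (by linarith) (by linarith) hγ0 hr ht
      hC.le (fun s _ => hp_nonneg s x y) (hdiag x y)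
      (fun s => hoff x y s hxy) (fun s _ => hπ_nonneg t s)
      (fun s hs => hπ_upper t s ht hs)).trans
      (mul_le_mul_of_nonneg_right (le_add_of_nonneg_left hA.le) (by positivity))

/-- upper bound for the heat kernel of the `γ`-stable subordinated
diffusion: `q(t,x,y) ≲ min{1/V(x,φ⁻¹(t)), t/(V(x,d(x,y))·φ(d(x,y)))}`. -/
theorem subordinated_heat_kernel_upper
    {M : Type*} [MetricSpace M]
    (V : M → ℝ → ℝ) (c1 c2 d1 d2 : ℝ)
    (hc1 : 0 < c1) (hc1' : c1 ≤ 1) (hc2 : 1 ≤ c2) (hd1 : 0 < d1) (hd12 : d1 ≤ d2)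
    (hVpos : ∀ (x : M) (r : ℝ), 0 < r → 0 < V x r)
    (hVmono : ∀ x : M, MonotoneOn (V x) (Ioi (0:ℝ)))
    (hVgrowth : ∀ (x : M) (r R : ℝ), 0 < r → r < R →
      c1 * (R / r) ^ d1 ≤ V x R / V x r ∧ V x R / V x r ≤ c2 * (R / r) ^ d2)
    (γ β1 β2 : ℝ) (hγ0 : 0 < γ) (hγ1 : γ < 1) (hβ1 : 2 ≤ β1) (hβ2 : 2 ≤ β2)
    (p : ℝ → M → M → ℝ)
    (hp_nonneg : ∀ (s : ℝ) (x y : M), 0 ≤ p s x y)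
    (c2' c4' C2 C4 : ℝ) (hc2'pos : 0 < c2') (hc4'pos : 0 < c4')
    (hC2 : 0 < C2) (hC4 : 0 < C4)
    (hp_small : ∀ (s : ℝ) (x y : M), 0 < s → s ≤ max 1 (dist x y) →
      p s x y ≤ (c2' / V x (s ^ (1/β1))) *
        Real.exp (-C2 * (dist x y ^ β1 / s) ^ (1/(β1 - 1))))
    (hp_large : ∀ (s : ℝ) (x y : M), max 1 (dist x y) ≤ s →
      p s x y ≤ (c4' / V x (s ^ (1/β2))) *
        Real.exp (-C4 * (dist x y ^ β2 / s) ^ (1/(β2 - 1))))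
    (πsub : ℝ → ℝ → ℝ) (c₀ : ℝ) (hc₀ : 0 < c₀)
    (hπ_nonneg : ∀ t s : ℝ, 0 ≤ πsub t s)
    (hπ_upper : ∀ t s : ℝ, 0 < t → 0 < s →
      πsub t s ≤ c₀ * (t / s ^ (1 + γ)) * Real.exp (-(t / s ^ γ))) :
    ∃ A : ℝ, 0 < A ∧
      ∀ (t : ℝ) (x y : M), 0 < t → x ≠ y →
        ∫ s in Ioi (0:ℝ), p s x y * πsub t s ≤
          A * min (1 / V x (if t < 1 then t ^ (1/(γ * β1)) else t ^ (1/(γ * β2))))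
            (t / (V x (dist x y) *
              (if dist x y < 1 then dist x y ^ (γ * β1) else dist x y ^ (γ * β2)))) :=
  subordinated_heat_kernel_upper_general V c1 c2 d1 d2 hc2 hd1 hd12 hVpos hVmono hVgrowth γ β1 β2
    hγ0 hβ1 hβ2 p hp_nonneg c2' c4' C2 C4 hc2'pos hc4'pos hC2 hC4 hp_small hp_large πsub c₀ hc₀
    hπ_nonneg hπ_upper
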